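/- arXiv:math/0601573 — 7 statements merged into one kernel-verified Lean document; each statement's English description precedes it below -/
import Mathlib

section
/- For every positive integer l, one has the polynomial identity ∑_{k odd, k ∣ l} t^{(l−l/k)/2} · γ_{l/k}(t) = 1 in ℤ[t]; that is, the polynomials γ_m solve the defining relation ∑_{k odd, k ∣ l} t^{−l/(2k)} γ_{l/k}(t) = t^{−l/2} of the character formula. -/
/-!
Expanding `γ_{l/k}`, the exponents telescope: the `(k, j)` term of the double sum is
`μ(j) t^((l − l/(kj))/2)`. Grouping the terms by `d = kj`, which runs over the odd divisors
of `l` while `j` runs over all divisors of `d`, the coefficient of `t^((l − l/d)/2)` is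
`∑_{j ∣ d} μ(j)`, which vanishes unless `d = 1`.
-/

open Polynomial

/-- For a positive integer `m`, the polynomial
`γ_m(t) = ∑_{k odd, k ∣ m} μ(k) · t^((m − m/k)/2)` in `ℤ[t]`. -/
noncomputable def gammaPoly (m : ℕ) : Polynomial ℤ :=
  ∑ k ∈ m.divisors.filter (fun k => Odd k),
    Polynomial.C (ArithmeticFunction.moebius k) * Polynomial.X ^ ((m - m / k) / 2)

open Finset ArithmeticFunction
open scoped ArithmeticFunction.Moebius

theorem Nat.even_sub_div_of_odd_of_dvd {n k : ℕ} (hk : Odd k) (hkn : k ∣ n) :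
    Even (n - n / k) := by
  obtain ⟨m, rfl⟩ := hkn
  rw [Nat.mul_div_cancel_left m hk.pos, ← Nat.sub_one_mul]
  exact (Nat.Odd.sub_odd hk odd_one).mul_right m

theorem Nat.sub_div_two_add_sub_div_two {a b c : ℕ} (hba : b ≤ a) (hcb : c ≤ b)
    (hbc : Even (b - c)) : (a - b) / 2 + (b - c) / 2 = (a - c) / 2 := by
  obtain ⟨r, hr⟩ := hbc
  omega

theorem ArithmeticFunction.sum_divisors_moebius {R : Type*} [Ring R] (n : ℕ) :
    ∑ d ∈ n.divisors, (μ d : R) = if n = 1 then 1 else 0 := by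
  have hℤ : ∑ d ∈ n.divisors, μ d = if n = 1 then 1 else 0 := by
    rw [← coe_mul_zeta_apply, moebius_mul_coe_zeta, one_apply]
  rw [← Int.cast_sum, hℤ]
  split_ifs <;> simp

theorem Nat.sum_odd_divisors_sum_odd_divisors_div {M : Type*} [AddCommMonoid M] {n : ℕ}
    (hn : n ≠ 0) (f : ℕ → ℕ → M) :
    ∑ k ∈ n.divisors.filter Odd, ∑ j ∈ (n / k).divisors.filter Odd, f k j
      = ∑ d ∈ n.divisors.filter Odd, ∑ j ∈ d.divisors, f (d / j) j := by
  rw [sum_sigma', sum_sigma']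
  refine sum_nbij' (fun p => ⟨p.1 * p.2, p.2⟩) (fun p => ⟨p.1 / p.2, p.2⟩) ?_ ?_ ?_ ?_ ?_
  · rintro ⟨k, j⟩ hp
    simp only [mem_sigma, mem_filter, Nat.mem_divisors] at hp ⊢
    obtain ⟨⟨⟨hkn, -⟩, hk⟩, ⟨hjn, -⟩, hj⟩ := hp
    exact ⟨⟨⟨(Nat.dvd_div_iff_mul_dvd hkn).mp hjn, hn⟩, hk.mul hj⟩, dvd_mul_left j k,
      (hk.mul hj).pos.ne'⟩
  · rintro ⟨d, j⟩ hp
    simp only [mem_sigma, mem_filter, Nat.mem_divisors] at hp ⊢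
    obtain ⟨⟨⟨hdn, -⟩, hd⟩, hjd, -⟩ := hp
    have hdj : d / j ∣ d := Nat.div_dvd_of_dvd hjd
    have hdj_odd : Odd (d / j) := hd.of_dvd_nat hdj
    refine ⟨⟨⟨hdj.trans hdn, hn⟩, hdj_odd⟩, ⟨?_, ?_⟩, hd.of_dvd_nat hjd⟩
    · rw [Nat.dvd_div_iff_mul_dvd (hdj.trans hdn), Nat.div_mul_cancel hjd]
      exact hdn
    · exact (Nat.div_pos (Nat.le_of_dvd (Nat.pos_of_ne_zero hn) (hdj.trans hdn))
        hdj_odd.pos).ne'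
  · rintro ⟨k, j⟩ hp
    simp only [mem_sigma, mem_filter] at hp
    simp [Nat.mul_div_cancel k hp.2.2.pos]
  · rintro ⟨d, j⟩ hp
    simp only [mem_sigma, Nat.mem_divisors] at hp
    simp [Nat.div_mul_cancel hp.2.1]
  · rintro ⟨k, j⟩ hp
    simp only [mem_sigma, mem_filter] at hp
    rw [Nat.mul_div_cancel k hp.2.2.pos]

theorem Nat.sum_odd_divisors_sum_odd_divisors_moebius_mul {R : Type*} [Ring R] {n : ℕ}
    (hn : n ≠ 0) (g : ℕ → R) :
    ∑ k ∈ n.divisors.filter Odd, ∑ j ∈ (n / k).divisors.filter Odd, (μ j : R) * g (k * j)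
      = g 1 := by
  rw [Nat.sum_odd_divisors_sum_odd_divisors_div hn]
  have hcollapse : ∀ d ∈ n.divisors.filter Odd,
      ∑ j ∈ d.divisors, (μ j : R) * g (d / j * j) = if d = 1 then g d else 0 := by
    intro d _
    rw [sum_congr rfl fun j hj => by rw [Nat.div_mul_cancel (Nat.dvd_of_mem_divisors hj)],
      ← sum_mul, sum_divisors_moebius]
    split_ifs <;> simp
  rw [sum_congr rfl hcollapse, sum_ite_eq']
  simp [Nat.one_mem_divisors.mpr hn]

theorem X_pow_sub_div_two_mul_gammaPoly (l k : ℕ) :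
    X ^ ((l - l / k) / 2) * gammaPoly (l / k)
      = ∑ j ∈ (l / k).divisors.filter Odd, (μ j : ℤ[X]) * X ^ ((l - l / (k * j)) / 2) := by
  rw [gammaPoly, mul_sum]
  refine sum_congr rfl fun j hj => ?_
  obtain ⟨⟨hj_dvd, -⟩, hj⟩ := by simpa only [mem_filter, Nat.mem_divisors] using hj
  have hexp : (l - l / k) / 2 + (l / k - l / k / j) / 2 = (l - l / (k * j)) / 2 := by
    rw [Nat.sub_div_two_add_sub_div_two (Nat.div_le_self l k) (Nat.div_le_self _ j)
      (Nat.even_sub_div_of_odd_of_dvd hj hj_dvd), Nat.div_div_eq_div_mul]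
  rw [← hexp, pow_add, eq_intCast C]
  ring

/-- For every positive integer `l`,
`∑_{k odd, k ∣ l} t^((l − l/k)/2) · γ_{l/k}(t) = 1` in `ℤ[t]`. -/
theorem gammaPoly_defining_relation (l : ℕ) (hl : 1 ≤ l) :
    ∑ k ∈ l.divisors.filter (fun k => Odd k),
      Polynomial.X ^ ((l - l / k) / 2) * gammaPoly (l / k) = 1 := by
  have hl0 : l ≠ 0 := Nat.one_le_iff_ne_zero.mp hl
  calc ∑ k ∈ l.divisors.filter (fun k => Odd k), X ^ ((l - l / k) / 2) * gammaPoly (l / k)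
      = ∑ k ∈ l.divisors.filter Odd, ∑ j ∈ (l / k).divisors.filter Odd,
          (μ j : ℤ[X]) * X ^ ((l - l / (k * j)) / 2) :=
        sum_congr rfl fun k _ => X_pow_sub_div_two_mul_gammaPoly l k
    _ = X ^ ((l - l / 1) / 2) :=
        Nat.sum_odd_divisors_sum_odd_divisors_moebius_mul hl0 fun d => X ^ ((l - l / d) / 2)
    _ = 1 := by simp
end

section
/- With the above notation, for every finitely supported n : ℕ≥1 → ℕ and every m ≥ 1 such that n(j) = 0 for all j > m, one has P(n + 2·1_m) = ((c_m + o_m(n))² − (m·n(m))²) · P(n) in R, where 1_m denotes the indicator function of {m}. -/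
/-- `o_m(n) = ∑_{k ≥ 1, 2^k ∣ m} (m/2^k) · n(m/2^k)`. -/
def oFun (n : ℕ →₀ ℕ) (m : ℕ) : ℕ :=
  ∑ k ∈ (Finset.Icc 1 m).filter (fun k => 2 ^ k ∣ m), (m / 2 ^ k) * n (m / 2 ^ k)

/-- The explicit product
`P(n) = ∏_{l : n(l) ≥ 1} (c_l + o_l(n)) · ∏_{i=0}^{n(l)−2} (c_l + o_l(n) + l·(n(l)−2−2i))`. -/
def Pfun {R : Type*} [CommRing R] (c : ℕ → R) (n : ℕ →₀ ℕ) : R :=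
  ∏ l ∈ n.support,
    (c l + (oFun n l : R)) *
      ∏ i ∈ Finset.range (n l - 1),
        (c l + (oFun n l : R) + (((l : ℤ) * ((n l : ℤ) - 2 - 2 * (i : ℤ)) : ℤ) : R))

/-!
Adding `2` at the top index `m` changes only the `m`-th factor of `P`: the other factors see
only values of `n` below their own index, and `o_m` sees only values below `m`. In the
`m`-th factor the inner product gains two terms, `c_m + o_m(n) ± m·n(m)`, while the
remaining terms are shifted by one index and are unchanged.
-/

def Pfactor {R : Type*} [CommRing R] (a : R) (l N : ℕ) : R :=
  a * ∏ i ∈ Finset.range (N - 1), (a + (((l : ℤ) * ((N : ℤ) - 2 - 2 * (i : ℤ)) : ℤ) : R))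

lemma Pfun_eq_prod_Pfactor {R : Type*} [CommRing R] (c : ℕ → R) (n : ℕ →₀ ℕ) :
    Pfun c n = ∏ l ∈ n.support, Pfactor (c l + (oFun n l : R)) l (n l) := rfl

section Pfactor

variable {R : Type*} [CommRing R] (a : R) (l : ℕ)

lemma Pfactor_two : Pfactor a l 2 = a ^ 2 := by
  simp [Pfactor, sq]

lemma Pfactor_add_two {N : ℕ} (hN : N ≠ 0) :
    Pfactor a l (N + 2) = (a ^ 2 - (l * N : R) ^ 2) * Pfactor a l N := by
  obtain ⟨M, rfl⟩ := Nat.exists_eq_succ_of_ne_zero hN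
  simp only [Pfactor, Nat.succ_sub_one, show M + 1 + 2 - 1 = M + 1 + 1 by omega,
    Finset.prod_range_succ, Finset.prod_range_succ' _ M]
  have hmiddle : ∀ i ∈ Finset.range M,
      a + (((l : ℤ) * (((M + 1 + 2 : ℕ) : ℤ) - 2 - 2 * ((i + 1 : ℕ) : ℤ)) : ℤ) : R) =
        a + (((l : ℤ) * (((M + 1 : ℕ) : ℤ) - 2 - 2 * (i : ℤ)) : ℤ) : R) := by
    intro i _
    push_cast
    ring
  rw [Finset.prod_congr rfl hmiddle]
  push_cast
  ring

end Pfactor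

lemma oFun_congr {f g : ℕ →₀ ℕ} {l : ℕ} (h : ∀ j < l, f j = g j) : oFun f l = oFun g l := by
  refine Finset.sum_congr rfl fun k hk => ?_
  obtain ⟨⟨hk1, hkl⟩, -⟩ := by simpa only [Finset.mem_filter, Finset.mem_Icc] using hk
  rw [h _ (Nat.div_lt_self (by omega) (Nat.one_lt_two_pow (by omega)))]

lemma Pfun_add_single_two {R : Type*} [CommRing R] (c : ℕ → R) (n : ℕ →₀ ℕ) (m : ℕ)
    (h : ∀ j, m < j → n j = 0) :
    Pfun c (n + Finsupp.single m 2) =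
      Pfactor (c m + (oFun n m : R)) m (n m + 2) *
        ∏ l ∈ n.support.erase m, Pfactor (c l + (oFun n l : R)) l (n l) := by
  have hbelow : ∀ l, l ≤ m → ∀ j < l, (n + Finsupp.single m 2 : ℕ →₀ ℕ) j = n j := by
    intro l hl j hj
    rw [Finsupp.add_apply, Finsupp.single_eq_of_ne (show j ≠ m by omega), add_zero]
  have hsupport : (n + Finsupp.single m 2).support = insert m n.support := by
    rw [Finsupp.support_add_eq_union, Finsupp.support_single _ two_ne_zero,
      Finset.union_comm, Finset.insert_eq]
  have hrest : ∀ l ∈ n.support.erase m,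
      Pfactor (c l + (oFun (n + Finsupp.single m 2) l : R)) l
          ((n + Finsupp.single m 2 : ℕ →₀ ℕ) l) =
        Pfactor (c l + (oFun n l : R)) l (n l) := by
    intro l hl
    obtain ⟨hlm, hl⟩ := Finset.mem_erase.mp hl
    have hlm' : l ≤ m := by_contra fun hml => Finsupp.mem_support_iff.mp hl (h l (by omega))
    rw [oFun_congr (hbelow l hlm'), Finsupp.add_apply, Finsupp.single_eq_of_ne hlm, add_zero]
  rw [Pfun_eq_prod_Pfactor, hsupport, ← Finset.mul_prod_erase _ _ (Finset.mem_insert_self _ _),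
    Finset.erase_insert_eq_erase, Finset.prod_congr rfl hrest, oFun_congr (hbelow m le_rfl),
    Finsupp.add_apply, Finsupp.single_eq_same]

theorem Pfun_add_two_general {R : Type*} [CommRing R] (c : ℕ → R) (n : ℕ →₀ ℕ)
    (m : ℕ) (h : ∀ j, m < j → n j = 0) :
    Pfun c (n + Finsupp.single m 2) =
      ((c m + (oFun n m : R)) ^ 2 - ((m : R) * (n m : R)) ^ 2) * Pfun c n := by
  rw [Pfun_add_single_two c n m h, Pfun_eq_prod_Pfactor]
  by_cases hnm : n m = 0
  · rw [hnm, Pfactor_two, Finset.erase_eq_of_notMem (Finsupp.notMem_support_iff.mpr hnm)]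
    simp
  · rw [Pfactor_add_two _ _ hnm, ← Finset.mul_prod_erase _ _ (Finsupp.mem_support_iff.mpr hnm)]
    ring

/-- The quadratic recurrence: if `n(j) = 0` for all `j > m` (with `m ≥ 1` and `n`
supported on positive integers), then
`P(n + 2·1_m) = ((c_m + o_m(n))² − (m·n(m))²) · P(n)`. -/
theorem Pfun_add_two {R : Type*} [CommRing R] (c : ℕ → R) (n : ℕ →₀ ℕ)
    (h0 : n 0 = 0) (m : ℕ) (hm : 1 ≤ m) (h : ∀ j, m < j → n j = 0) :
    Pfun c (n + Finsupp.single m 2) =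
      ((c m + (oFun n m : R)) ^ 2 - ((m : R) * (n m : R)) ^ 2) * Pfun c n :=
  Pfun_add_two_general c n m h
end

section
/- For every real number c and every integer n ≥ 1, the n-th derivative at 0 of the function u ↦ exp(c · arsinh(u)) equals c · ∏_{i=0}^{n−2} (c + n − 2 − 2i), where the product is empty (equal to 1) when n = 1. -/
/-!
`f u = exp (c · arsinh u)` satisfies `√(1 + u²) f' = c f`, hence the second-order equation
`(1 + u²) f'' + u f' = c² f`. Differentiating it `n` times gives
`(1 + u²) f⁽ⁿ⁺²⁾ + (2n + 1) u f⁽ⁿ⁺¹⁾ = (c² - n²) f⁽ⁿ⁾`, which at `u = 0` is the two-step recurrence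
`f⁽ⁿ⁺²⁾(0) = (c - n)(c + n) f⁽ⁿ⁾(0)` with `f(0) = 1`, `f'(0) = c`; the product formula solves it.
-/

open Real Finset
open scoped ContDiff

theorem ContDiff.hasDerivAt_iteratedDeriv {𝕜 F : Type*} [NontriviallyNormedField 𝕜]
    [NormedAddCommGroup F] [NormedSpace 𝕜 F] {f : 𝕜 → F} {n : WithTop ℕ∞} (hf : ContDiff 𝕜 n f)
    {k : ℕ} (hk : k < n) (x : 𝕜) :
    HasDerivAt (iteratedDeriv k f) (iteratedDeriv (k + 1) f x) x := by
  rw [iteratedDeriv_succ]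
  exact (hf.differentiable_iteratedDeriv k hk x).hasDerivAt

theorem iteratedDeriv_ode {f : ℝ → ℝ} {c : ℝ} (hf : ContDiff ℝ ∞ f)
    (hode : ∀ u, (1 + u ^ 2) * iteratedDeriv 2 f u + u * iteratedDeriv 1 f u =
      c ^ 2 * iteratedDeriv 0 f u) (n : ℕ) (u : ℝ) :
    (1 + u ^ 2) * iteratedDeriv (n + 2) f u + (2 * n + 1) * u * iteratedDeriv (n + 1) f u =
      (c ^ 2 - n ^ 2) * iteratedDeriv n f u := by
  induction n generalizing u with
  | zero => simpa using hode u
  | succ n ih =>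
    have hderiv (k : ℕ) :=
      hf.hasDerivAt_iteratedDeriv (k := k) (by exact_mod_cast ENat.natCast_lt_top k) u
    have hsq : HasDerivAt (fun u : ℝ => 1 + u ^ 2) (2 * u) u := by
      simpa using (hasDerivAt_pow 2 u).const_add 1
    have hlhs := (hsq.mul (hderiv (n + 2))).add
      (((hasDerivAt_id' u).const_mul (2 * (n : ℝ) + 1)).mul (hderiv (n + 1)))
    have hrhs := (hderiv n).const_mul (c ^ 2 - (n : ℝ) ^ 2)
    -- the identity for `n` holds at every point, so both of its sides have the same derivative
    have hdiff := hlhs.unique (hrhs.congr_of_eventuallyEq (.of_forall ih))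
    push_cast
    linear_combination hdiff

theorem hasDerivAt_exp_mul_arsinh (c u : ℝ) :
    HasDerivAt (fun u => exp (c * arsinh u)) (c * exp (c * arsinh u) / √(1 + u ^ 2)) u := by
  convert ((hasDerivAt_arsinh u).const_mul c).exp using 1
  field_simp

theorem deriv_exp_mul_arsinh (c : ℝ) :
    deriv (fun u => exp (c * arsinh u)) = fun u => c * exp (c * arsinh u) / √(1 + u ^ 2) :=
  funext fun u => (hasDerivAt_exp_mul_arsinh c u).deriv

theorem exp_mul_arsinh_ode (c u : ℝ) :
    (1 + u ^ 2) * iteratedDeriv 2 (fun u => exp (c * arsinh u)) u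
      + u * iteratedDeriv 1 (fun u => exp (c * arsinh u)) u
      = c ^ 2 * iteratedDeriv 0 (fun u => exp (c * arsinh u)) u := by
  have hsq : HasDerivAt (fun u : ℝ => 1 + u ^ 2) (2 * u) u := by
    simpa using (hasDerivAt_pow 2 u).const_add 1
  have hpos : (0 : ℝ) < 1 + u ^ 2 := by positivity
  have hderiv2 := ((hasDerivAt_exp_mul_arsinh c u).const_mul c).fun_div (hsq.sqrt hpos.ne')
    (sqrt_pos.2 hpos).ne'
  rw [iteratedDeriv_succ, iteratedDeriv_one, iteratedDeriv_zero, deriv_exp_mul_arsinh,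
    hderiv2.deriv]
  have hs : √(1 + u ^ 2) ^ 2 = 1 + u ^ 2 := sq_sqrt hpos.le
  field_simp
  linear_combination (c * u - c ^ 2 * √(1 + u ^ 2)) * hs

theorem prod_range_add_two_sub_two_mul {R : Type*} [CommRing R] (c : R) (m : ℕ) :
    ∏ i ∈ range (m + 2), (c + ((m + 3 : ℕ) : R) - 2 - 2 * i) =
      (c ^ 2 - ((m + 1 : ℕ) : R) ^ 2) * ∏ i ∈ range m, (c + ((m + 1 : ℕ) : R) - 2 - 2 * i) := by
  rw [prod_range_succ, prod_range_succ']
  have hshift : ∏ i ∈ range m, (c + ((m + 3 : ℕ) : R) - 2 - 2 * ((i + 1 : ℕ) : R)) =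
      ∏ i ∈ range m, (c + ((m + 1 : ℕ) : R) - 2 - 2 * i) :=
    prod_congr rfl fun i _ => by push_cast; ring
  rw [hshift]
  push_cast
  ring

theorem eq_mul_prod_of_two_step_recurrence {R : Type*} [CommRing R] {c : R} {a : ℕ → R}
    (h0 : a 0 = 1) (h1 : a 1 = c) (hrec : ∀ n : ℕ, a (n + 2) = (c ^ 2 - n ^ 2) * a n) :
    ∀ n, 1 ≤ n → a n = c * ∏ i ∈ range (n - 1), (c + (n : R) - 2 - 2 * i)
  | 1, _ => by simp [h1]
  | 2, _ => by simp [hrec 0, h0, sq]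
  | m + 3, _ => by
    rw [hrec (m + 1), eq_mul_prod_of_two_step_recurrence h0 h1 hrec (m + 1) (by omega),
      Nat.add_sub_cancel, show m + 3 - 1 = m + 2 from rfl, prod_range_add_two_sub_two_mul]
    ring

/-- For every real `c` and integer `n ≥ 1`, the `n`-th derivative at `0` of
`u ↦ exp(c · arsinh u)` equals `c · ∏_{i=0}^{n−2} (c + n − 2 − 2i)`. -/
theorem iteratedDeriv_exp_arsinh (c : ℝ) (n : ℕ) (hn : 1 ≤ n) :
    iteratedDeriv n (fun u : ℝ => Real.exp (c * Real.arsinh u)) 0 =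
      c * ∏ i ∈ Finset.range (n - 1), (c + (n : ℝ) - 2 - 2 * i) := by
  have hf : ContDiff ℝ ∞ fun u => exp (c * arsinh u) := (contDiff_const.mul contDiff_arsinh).exp
  refine eq_mul_prod_of_two_step_recurrence
    (a := fun k => iteratedDeriv k (fun u => exp (c * arsinh u)) 0) ?_ ?_ ?_ n hn
  · simp
  · simp [iteratedDeriv_one, deriv_exp_mul_arsinh]
  · intro k
    simpa using iteratedDeriv_ode hf (exp_mul_arsinh_ode c) k 0
end

section
/- For every real t > 0 and every natural number n, the n-th derivative at 0 of the function u ↦ exp(arsinh(u·√t)/√t) equals ∏_{i=0}^{⌊(n−2)/2⌋} (1 − (n−2−2i)²·t), where the product is empty (equal to 1) when n ≤ 1. (This is the exponential generating function identity for the Poincaré polynomials ∏_{i=0}^{⌊(n−2)/2⌋}(1−(n−2−2i)²t) of the real moduli spaces M_{n+1} = \overline{M_{0,n+1}}(ℝ).) -/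
/-!
The function `f(u) = exp (arsinh (u √t) / √t)` satisfies `f' = f / √(1 + t u²)`, hence the
linear ODE `(1 + t u²) f'' + t u f' = f`. Differentiating it `n` times at `0` with Leibniz' rule
gives `f⁽ⁿ⁺²⁾(0) = (1 - n² t) f⁽ⁿ⁾(0)`, and together with `f(0) = f'(0) = 1` this is exactly
the recurrence satisfied by the products `∏ (1 - (n - 2 - 2i)² t)`.
-/

open Real
open scoped ContDiff

section IteratedDeriv

variable {𝕜 : Type*} [NontriviallyNormedField 𝕜]

theorem iteratedDeriv_iteratedDeriv {F : Type*} [NormedAddCommGroup F] [NormedSpace 𝕜 F]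
    (f : 𝕜 → F) (n m : ℕ) :
    iteratedDeriv n (iteratedDeriv m f) = iteratedDeriv (n + m) f := by
  simp only [iteratedDeriv_eq_iterate, Function.iterate_add]
  rfl

theorem ContDiff.iteratedDeriv {F : Type*} [NormedAddCommGroup F] [NormedSpace 𝕜 F]
    {f : 𝕜 → F} (hf : ContDiff 𝕜 ∞ f) (m : ℕ) : ContDiff 𝕜 ∞ (iteratedDeriv m f) := by
  simpa only [iteratedDeriv_eq_iterate] using hf.iterate_deriv m

theorem iteratedDeriv_pow_mul_apply_zero {g : 𝕜 → 𝕜} {n : ℕ} (hg : ContDiffAt 𝕜 n g 0)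
    (m : ℕ) :
    iteratedDeriv n (fun x => x ^ m * g x) 0 =
      n.descFactorial m * iteratedDeriv (n - m) g 0 := by
  rw [iteratedDeriv_fun_mul (by fun_prop) hg, Finset.sum_eq_single m]
  · simp [Nat.descFactorial_eq_factorial_mul_choose, mul_comm]
  · intro i _ hi
    rcases lt_or_gt_of_ne hi with h | h
    · simp [zero_pow (Nat.sub_ne_zero_of_lt h)]
    · simp [Nat.descFactorial_of_lt h]
  · intro hm
    simp [Nat.choose_eq_zero_of_lt (by simpa using hm : n < m)]

theorem iteratedDeriv_pow_mul_iteratedDeriv_apply_zero {g : 𝕜 → 𝕜} (hg : ContDiff 𝕜 ∞ g)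
    (n m : ℕ) :
    iteratedDeriv n (fun x => x ^ m * iteratedDeriv m g x) 0 =
      n.descFactorial m * iteratedDeriv n g 0 := by
  rw [iteratedDeriv_pow_mul_apply_zero ((hg.iteratedDeriv m).contDiffAt.of_le (mod_cast le_top)),
    iteratedDeriv_iteratedDeriv]
  rcases le_or_gt m n with h | h
  · rw [Nat.sub_add_cancel h]
  · simp [Nat.descFactorial_of_lt h]

end IteratedDeriv

noncomputable def arsinhExp (t u : ℝ) : ℝ := exp (arsinh (u * √t) / √t)

theorem contDiff_arsinhExp (t : ℝ) : ContDiff ℝ ∞ (arsinhExp t) := by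
  unfold arsinhExp; fun_prop

theorem arsinhExp_zero (t : ℝ) : arsinhExp t 0 = 1 := by simp [arsinhExp]

theorem hasDerivAt_arsinhExp {t : ℝ} (ht : 0 < t) (u : ℝ) :
    HasDerivAt (arsinhExp t) (arsinhExp t u / √(1 + t * u ^ 2)) u := by
  have hs : √t ≠ 0 := by positivity
  have h := (((hasDerivAt_mul_const √t).arsinh).div_const √t).exp (x := u)
  unfold arsinhExp
  convert h using 1
  rw [mul_pow, sq_sqrt ht.le, smul_eq_mul]
  field_simp

theorem deriv_arsinhExp {t : ℝ} (ht : 0 < t) :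
    deriv (arsinhExp t) = fun u => arsinhExp t u / √(1 + t * u ^ 2) :=
  funext fun u => (hasDerivAt_arsinhExp ht u).deriv

theorem arsinhExp_ode {t : ℝ} (ht : 0 < t) (u : ℝ) :
    (1 + t * u ^ 2) * iteratedDeriv 2 (arsinhExp t) u + t * u * deriv (arsinhExp t) u =
      arsinhExp t u := by
  have hq : 0 < 1 + t * u ^ 2 := by positivity
  have hw : HasDerivAt (fun u => √(1 + t * u ^ 2)) (t * u / √(1 + t * u ^ 2)) u := by
    convert ((hasDerivAt_pow 2 u).const_mul t |>.const_add 1).sqrt hq.ne' using 1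
    field_simp; ring
  have h2 := ((hasDerivAt_arsinhExp ht u).fun_div hw (by positivity)).deriv
  rw [iteratedDeriv_succ, iteratedDeriv_one, deriv_arsinhExp ht, h2]
  set w := √(1 + t * u ^ 2) with hw_def
  have hw0 : w ≠ 0 := by positivity
  rw [← sq_sqrt hq.le, ← hw_def]
  field_simp
  ring

theorem iteratedDeriv_arsinhExp_add_two_zero {t : ℝ} (ht : 0 < t) (n : ℕ) :
    iteratedDeriv (n + 2) (arsinhExp t) 0 =
      (1 - n ^ 2 * t) * iteratedDeriv n (arsinhExp t) 0 := by
  have hf := contDiff_arsinhExp t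
  have hf₁ : ContDiff ℝ n (iteratedDeriv 1 (arsinhExp t)) :=
    contDiff_infty.mp (hf.iteratedDeriv 1) n
  have hf₂ : ContDiff ℝ n (iteratedDeriv 2 (arsinhExp t)) :=
    contDiff_infty.mp (hf.iteratedDeriv 2) n
  have ode : arsinhExp t = fun u => iteratedDeriv 2 (arsinhExp t) u +
      t * (u ^ 2 * iteratedDeriv 2 (arsinhExp t) u) +
      t * (u ^ 1 * iteratedDeriv 1 (arsinhExp t) u) := by
    funext u
    rw [← arsinhExp_ode ht u, iteratedDeriv_one]
    ring
  have h := congrArg (iteratedDeriv n · 0) ode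
  rw [iteratedDeriv_fun_add (by fun_prop) (by fun_prop),
    iteratedDeriv_fun_add (by fun_prop) (by fun_prop),
    iteratedDeriv_const_mul_field, iteratedDeriv_const_mul_field,
    iteratedDeriv_pow_mul_iteratedDeriv_apply_zero hf,
    iteratedDeriv_pow_mul_iteratedDeriv_apply_zero hf, iteratedDeriv_iteratedDeriv,
    Nat.cast_descFactorial_two, Nat.descFactorial_one] at h
  linear_combination -h

noncomputable def poincarePoly (t : ℝ) (n : ℕ) : ℝ :=
  if n ≤ 1 then 1 else ∏ i ∈ Finset.range ((n - 2) / 2 + 1), (1 - ((n : ℝ) - 2 - 2 * i) ^ 2 * t)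

theorem poincarePoly_add_two (t : ℝ) (n : ℕ) :
    poincarePoly t (n + 2) = (1 - n ^ 2 * t) * poincarePoly t n := by
  match n with
  | 0 | 1 => norm_num [poincarePoly]
  | k + 2 =>
    have hlen : (k + 2 + 2 - 2) / 2 + 1 = (k + 2 - 2) / 2 + 1 + 1 := by omega
    rw [poincarePoly, poincarePoly, if_neg (by omega), if_neg (by omega), hlen,
      Finset.prod_range_succ', mul_comm]
    push_cast
    congr 1
    · ring
    · exact Finset.prod_congr rfl fun i _ => by ring

/-- For every real `t > 0` and every natural `n`, the `n`-th derivative at `0` of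
`u ↦ exp(arsinh(u·√t)/√t)` equals `∏_{i=0}^{⌊(n−2)/2⌋} (1 − (n−2−2i)²·t)`, the
product being empty (equal to `1`) when `n ≤ 1`. -/
theorem iteratedDeriv_exp_arsinh_scaled (t : ℝ) (ht : 0 < t) (n : ℕ) :
    iteratedDeriv n
        (fun u : ℝ => Real.exp (Real.arsinh (u * Real.sqrt t) / Real.sqrt t)) 0 =
      if n ≤ 1 then 1
      else ∏ i ∈ Finset.range ((n - 2) / 2 + 1), (1 - ((n : ℝ) - 2 - 2 * i) ^ 2 * t) := by
  change iteratedDeriv n (arsinhExp t) 0 = poincarePoly t n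
  induction n using Nat.twoStepInduction with
  | zero => simp [arsinhExp_zero, poincarePoly]
  | one => simp [deriv_arsinhExp ht, arsinhExp_zero, poincarePoly]
  | more n ih _ => rw [iteratedDeriv_arsinhExp_add_two_zero ht, ih, poincarePoly_add_two]
end

section
/- For every real t with t > 0 and t ≠ 1, and for all real u, the function f(u) = ((−u·t + √(1 + u²·t))/(1 − t)) · exp(arsinh(u·√t)/√t) is differentiable and satisfies f'(u) = exp(arsinh(u·√t)/√t). (This is the one-variable specialization of the statement that the derivative with respect to p₁ of the extended cycle index Z⁺_Λ equals the cycle index of Λ'.) -/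
/-! With `g u = arsinh (u √t) / √t` and `R u = √(1 + u² t)` one has `g' = 1 / R` and
`R' = u t / R`. The prefactor `A = (R - u t) / (1 - t)` therefore satisfies `A' + A g' = 1`,
which is exactly the condition for `(A · exp g)' = exp g`. -/

open Real

theorem hasDerivAt_mul_exp_of_add_mul_eq_one {A g : ℝ → ℝ} {A' g' u : ℝ}
    (hA : HasDerivAt A A' u) (hg : HasDerivAt g g' u) (h : A' + A u * g' = 1) :
    HasDerivAt (fun x => A x * Real.exp (g x)) (Real.exp (g u)) u := by
  refine (hA.mul hg.exp).congr_deriv ?_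
  linear_combination Real.exp (g u) * h

theorem hasDerivAt_arsinh_mul_div {c : ℝ} (hc : c ≠ 0) (u : ℝ) :
    HasDerivAt (fun x => arsinh (x * c) / c) (1 / √(1 + (u * c) ^ 2)) u := by
  refine (((hasDerivAt_mul_const c).arsinh).div_const c).congr_deriv ?_
  rw [smul_eq_mul]
  field_simp

theorem hasDerivAt_sqrt_one_add_sq_mul {t : ℝ} (ht : 0 ≤ t) (u : ℝ) :
    HasDerivAt (fun x => √(1 + x ^ 2 * t)) (u * t / √(1 + u ^ 2 * t)) u := by
  have hpos : 0 < 1 + u ^ 2 * t := by positivity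
  refine ((((hasDerivAt_pow 2 u).mul_const t).const_add 1).sqrt hpos.ne').congr_deriv ?_
  field_simp
  ring

/-- For `t > 0`, `t ≠ 1`, the function
`f(u) = ((−u·t + √(1 + u²·t))/(1 − t)) · exp(arsinh(u·√t)/√t)` is differentiable
with `f'(u) = exp(arsinh(u·√t)/√t)`. -/
theorem extended_cycle_index_deriv (t : ℝ) (ht : 0 < t) (ht1 : t ≠ 1) :
    let f : ℝ → ℝ := fun u =>
      ((-u * t + Real.sqrt (1 + u ^ 2 * t)) / (1 - t)) *
        Real.exp (Real.arsinh (u * Real.sqrt t) / Real.sqrt t)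
    (∀ u : ℝ, DifferentiableAt ℝ f u) ∧
    ∀ u : ℝ, deriv f u = Real.exp (Real.arsinh (u * Real.sqrt t) / Real.sqrt t) := by
  intro f
  have hf : ∀ u, HasDerivAt f (exp (arsinh (u * √t) / √t)) u := by
    intro u
    have hR : 0 < √(1 + u ^ 2 * t) := sqrt_pos.mpr (by positivity)
    have h1t : 1 - t ≠ 0 := sub_ne_zero.mpr (Ne.symm ht1)
    have hg := hasDerivAt_arsinh_mul_div (sqrt_pos.mpr ht).ne' u
    rw [mul_pow, sq_sqrt ht.le] at hg
    have hA := (((hasDerivAt_id u).neg.mul_const t).add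
      (hasDerivAt_sqrt_one_add_sq_mul ht.le u)).div_const (1 - t)
    refine hasDerivAt_mul_exp_of_add_mul_eq_one hA hg ?_
    field_simp
    ring
  exact ⟨fun u => (hf u).differentiableAt, fun u => (hf u).deriv⟩
end

section
/- Let (n_m)_{m≥1} be a finitely supported family of nonnegative integers, set o_m = ∑_{k≥1, 2^k ∣ m} (m/2^k)·n_{m/2^k}, let g_l = 1 if l is a power of 2 (including l = 1) and g_l = 0 otherwise, and define the integer E = ∏_{l : n_l ≥ 1} (g_l + o_l) · ∏_{i=0}^{n_l − 2} (g_l + o_l + l·(n_l − 2 − 2i)) (inner product empty when n_l = 1, factor 1 when n_l = 0). Then E ≠ 0 if and only if n_l = 0 for every l that is not a power of 2 and there exists an integer k ≥ 0 with n_{2^j} = 1 for all 0 ≤ j < k and n_{2^k} even; moreover, in that case E = 2^{k(k−1)/2} · ∏_{j ≥ k, n_{2^j} ≥ 1} (1 + o_{2^j}) · ∏_{i=0}^{n_{2^j} − 2} (1 + o_{2^j} + 2^j·(n_{2^j} − 2 − 2i)). (This is the Euler character of \overline{M_{0,n}}(ℝ) at a permutation with n_1 + 1 fixed points and n_m m-cycles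 for m > 1, in the case where the permutation has a fixed point.) -/
open scoped Classical

/-! On powers of two, `o_{2^j} = ∑_{i<j} 2^i n_{2^i}`. If `n` charges some non-power of two, then at the
least such `l` every `l / 2^k` is a smaller non-power of two, so `g_l + o_l = 0` and `E = 0`.
Otherwise let `k` be least with `n_{2^k} ≠ 1`. Then `1 + o_{2^j} = 2^j` for `j ≤ k`, so the factors
below `2^k` multiply to `∏_{j<k} 2^j = 2^{k(k-1)/2}`, and the factor at `2^k` is
`2^k ∏_i 2^k (n_{2^k} - 1 - 2i)`, which vanishes when `n_{2^k} ≥ 3` is odd. When `n_{2^k}` is even,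
every term of every factor at `2^j`, `j ≥ k`, is `≡ 2^k [MOD 2^{k+1}]`, hence nonzero. -/

open Finset

section oFun

variable (n : ℕ →₀ ℕ)

lemma oFun_two_pow (j : ℕ) : oFun n (2 ^ j) = ∑ i ∈ range j, 2 ^ i * n (2 ^ i) := by
  have hdvd : (Icc 1 (2 ^ j)).filter (fun k => 2 ^ k ∣ 2 ^ j) = Icc 1 j := by
    ext k
    simp only [mem_filter, mem_Icc, Nat.pow_dvd_pow_iff_le_right one_lt_two]
    have := (Nat.lt_two_pow_self (n := j)).le
    constructor <;> rintro ⟨⟨_, _⟩, _⟩ <;> omega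
  rw [oFun, hdvd]
  refine sum_nbij' (j - ·) (j - ·) ?_ ?_ ?_ ?_ ?_ <;> intro a ha <;>
    simp only [mem_Icc, mem_range] at ha ⊢
  any_goals omega
  rw [Nat.pow_div ha.2 two_pos]

lemma one_add_oFun_two_pow_of_forall_lt_eq_one {j : ℕ} (h1 : ∀ i < j, n (2 ^ i) = 1) :
    1 + oFun n (2 ^ j) = 2 ^ j := by
  rw [oFun_two_pow, sum_congr rfl fun i hi => by rw [h1 i (mem_range.mp hi), mul_one]]
  have := geom_sum_mul_add 1 j
  norm_num at this
  rw [add_comm]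
  exact this

lemma one_add_oFun_two_pow_modEq {k j : ℕ} (h1 : ∀ i < k, n (2 ^ i) = 1)
    (hk : Even (n (2 ^ k))) (hkj : k ≤ j) : 1 + oFun n (2 ^ j) ≡ 2 ^ k [MOD 2 ^ (k + 1)] := by
  have hsplit : 1 + oFun n (2 ^ j) = 2 ^ k + ∑ i ∈ Ico k j, 2 ^ i * n (2 ^ i) := by
    rw [← one_add_oFun_two_pow_of_forall_lt_eq_one n h1, oFun_two_pow, oFun_two_pow,
      ← sum_range_add_sum_Ico _ hkj, add_assoc]
  have hdvd : 2 ^ (k + 1) ∣ ∑ i ∈ Ico k j, 2 ^ i * n (2 ^ i) := by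
    refine dvd_sum fun i hi => ?_
    obtain ⟨hki, -⟩ := mem_Ico.mp hi
    rcases hki.eq_or_lt with rfl | hlt
    · rw [pow_succ]; exact mul_dvd_mul_left _ (even_iff_two_dvd.mp hk)
    · exact (pow_dvd_pow 2 hlt).mul_right _
  rw [hsplit]
  simpa only [add_zero] using (Nat.modEq_zero_iff_dvd.mpr hdvd).add_left (2 ^ k)

end oFun

lemma ne_zero_of_modEq_two_pow {x : ℤ} {k : ℕ} (h : x ≡ 2 ^ k [ZMOD 2 ^ (k + 1)]) : x ≠ 0 := by
  rintro rfl
  have := Int.le_of_dvd (by positivity) (Int.modEq_zero_iff_dvd.mp h.symm)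
  rw [pow_succ] at this
  linarith [pow_pos (two_pos : (0 : ℤ) < 2) k]

lemma oFun_eq_zero_of_forall_lt (n : ℕ →₀ ℕ) {l : ℕ} (hl : ¬∃ k, l = 2 ^ k)
    (hmin : ∀ m < l, (¬∃ k, m = 2 ^ k) → n m = 0) : oFun n l = 0 := by
  refine sum_eq_zero fun k hk => ?_
  obtain ⟨⟨hk1, hkl⟩, hdvd⟩ := by simpa only [mem_filter, mem_Icc] using hk
  suffices n (l / 2 ^ k) = 0 by rw [this, mul_zero]
  refine hmin _ (Nat.div_lt_self (by omega) (Nat.one_lt_two_pow (by omega))) ?_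
  rintro ⟨a, ha⟩
  exact hl ⟨k + a, by rw [← Nat.mul_div_cancel' hdvd, ha, pow_add]⟩

lemma exists_two_pow_ne_one (n : ℕ →₀ ℕ) : ∃ j, n (2 ^ j) ≠ 1 := by
  obtain ⟨-, ⟨j, rfl⟩, hj⟩ := (Set.infinite_range_of_injective
    (Nat.pow_right_injective le_rfl)).exists_notMem_finset n.support
  exact ⟨j, by simp_all⟩

/-- The factor of `E` at `l`, with `c` in the role of `g_l`. -/
def eulerFactor (n : ℕ →₀ ℕ) (c : ℤ) (l : ℕ) : ℤ :=
  (c + (oFun n l : ℤ)) *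
    ∏ i ∈ range (n l - 1), (c + (oFun n l : ℤ) + (l : ℤ) * ((n l : ℤ) - 2 - 2 * (i : ℤ)))

section eulerFactor

variable (n : ℕ →₀ ℕ)

lemma prod_eulerFactor_eq_zero_of_not_pow (g : ℕ → ℤ)
    (hg0 : ∀ l : ℕ, (¬∃ k : ℕ, l = 2 ^ k) → g l = 0) (hex : ∃ l, n l ≠ 0 ∧ ¬∃ k, l = 2 ^ k) :
    ∏ l ∈ n.support, eulerFactor n (g l) l = 0 := by
  obtain ⟨hn, hl⟩ := Nat.find_spec hex
  have hO : oFun n (Nat.find hex) = 0 :=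
    oFun_eq_zero_of_forall_lt n hl fun m hm hm' => by_contra fun h => Nat.find_min hex hm ⟨h, hm'⟩
  refine prod_eq_zero (i := Nat.find hex) (Finsupp.mem_support_iff.mpr hn) ?_
  rw [eulerFactor, hg0 _ hl, hO, Nat.cast_zero, add_zero, zero_mul]

lemma eulerFactor_two_pow_of_forall_lt_eq_one {j : ℕ} (h1 : ∀ i < j, n (2 ^ i) = 1) :
    eulerFactor n 1 (2 ^ j) =
      2 ^ j * ∏ i ∈ range (n (2 ^ j) - 1), 2 ^ j * ((n (2 ^ j) : ℤ) - 1 - 2 * (i : ℤ)) := by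
  have hO : (1 + oFun n (2 ^ j) : ℤ) = 2 ^ j := by
    exact_mod_cast one_add_oFun_two_pow_of_forall_lt_eq_one n h1
  simp only [eulerFactor, hO, Nat.cast_pow, Nat.cast_ofNat]
  congr 1
  exact prod_congr rfl fun i _ => by ring

lemma eulerFactor_two_pow_eq_zero_of_odd {j : ℕ} (h1 : ∀ i < j, n (2 ^ i) = 1)
    (hodd : Odd (n (2 ^ j))) (hne : n (2 ^ j) ≠ 1) : eulerFactor n 1 (2 ^ j) = 0 := by
  obtain ⟨c, hc⟩ := hodd
  rw [eulerFactor_two_pow_of_forall_lt_eq_one n h1]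
  refine mul_eq_zero_of_right _ (prod_eq_zero (i := c) (mem_range.mpr (by omega)) ?_)
  rw [hc]
  push_cast
  ring

lemma eulerFactor_two_pow_ne_zero {k j : ℕ} (h1 : ∀ i < k, n (2 ^ i) = 1)
    (hk : Even (n (2 ^ k))) (hkj : k ≤ j) : eulerFactor n 1 (2 ^ j) ≠ 0 := by
  have hO : (1 + oFun n (2 ^ j) : ℤ) ≡ 2 ^ k [ZMOD 2 ^ (k + 1)] := by
    exact_mod_cast Int.natCast_modEq_iff.mpr (one_add_oFun_two_pow_modEq n h1 hk hkj)
  have hdvd : ∀ i : ℕ, (2 : ℤ) ^ (k + 1) ∣ 2 ^ j * ((n (2 ^ j) : ℤ) - 2 - 2 * i) := by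
    intro i
    rcases hkj.eq_or_lt with rfl | hlt
    · obtain ⟨c, hc⟩ := hk
      exact ⟨c - 1 - i, by rw [hc]; push_cast; ring⟩
    · exact (pow_dvd_pow 2 hlt).mul_right _
  refine mul_ne_zero (ne_zero_of_modEq_two_pow hO)
    (prod_ne_zero_iff.mpr fun i _ => ne_zero_of_modEq_two_pow (k := k) ?_)
  simpa using hO.add (Int.modEq_zero_iff_dvd.mpr (hdvd i))

lemma prod_eulerFactor_eq (g : ℕ → ℤ) (hg1 : ∀ l : ℕ, (∃ k : ℕ, l = 2 ^ k) → g l = 1)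
    (hsupp : ∀ l : ℕ, (¬∃ k : ℕ, l = 2 ^ k) → n l = 0) {k : ℕ} (h1 : ∀ j < k, n (2 ^ j) = 1) :
    ∏ l ∈ n.support, eulerFactor n (g l) l =
      2 ^ (k * (k - 1) / 2) *
        ∏ l ∈ n.support.filter (fun l => ∃ j : ℕ, k ≤ j ∧ l = 2 ^ j), eulerFactor n 1 l := by
  have hlow :
      n.support.filter (fun l => ¬∃ j : ℕ, k ≤ j ∧ l = 2 ^ j) = (range k).image (2 ^ ·) := by
    ext l
    simp only [mem_filter, mem_image, mem_range, Finsupp.mem_support_iff]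
    constructor
    · rintro ⟨hl, hhigh⟩
      obtain ⟨j, rfl⟩ := not_not.mp (mt (hsupp l) hl)
      exact ⟨j, not_le.mp fun hkj => hhigh ⟨j, hkj, rfl⟩, rfl⟩
    · rintro ⟨j, hj, rfl⟩
      refine ⟨by simp [h1 j hj], ?_⟩
      rintro ⟨j', hj', hjj'⟩
      have := Nat.pow_right_injective le_rfl hjj'
      omega
  have hlow_factor : ∀ j ∈ range k, eulerFactor n (g (2 ^ j)) (2 ^ j) = 2 ^ j := by
    intro j hj
    rw [hg1 _ ⟨j, rfl⟩, eulerFactor_two_pow_of_forall_lt_eq_one n fun i hi =>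
      h1 i (hi.trans (mem_range.mp hj)), h1 j (mem_range.mp hj)]
    simp
  rw [← prod_filter_not_mul_prod_filter _ (fun l => ∃ j : ℕ, k ≤ j ∧ l = 2 ^ j), hlow,
    prod_image fun _ _ _ _ h => Nat.pow_right_injective le_rfl h, prod_congr rfl hlow_factor,
    prod_pow_eq_pow_sum, sum_range_id]
  congr 1
  refine prod_congr rfl fun l hl => ?_
  obtain ⟨-, j, -, rfl⟩ := mem_filter.mp hl
  rw [hg1 _ ⟨j, rfl⟩]

end eulerFactor

theorem euler_char_fixed_point_case_general (n : ℕ →₀ ℕ) (g : ℕ → ℤ)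
    (hg1 : ∀ l : ℕ, (∃ k : ℕ, l = 2 ^ k) → g l = 1)
    (hg0 : ∀ l : ℕ, ¬ (∃ k : ℕ, l = 2 ^ k) → g l = 0) :
    let E : ℤ := ∏ l ∈ n.support,
      (g l + (oFun n l : ℤ)) *
        ∏ i ∈ Finset.range (n l - 1),
          (g l + (oFun n l : ℤ) + (l : ℤ) * ((n l : ℤ) - 2 - 2 * (i : ℤ)))
    (E ≠ 0 ↔
      (∀ l : ℕ, ¬ (∃ k : ℕ, l = 2 ^ k) → n l = 0) ∧
      ∃ k : ℕ, (∀ j : ℕ, j < k → n (2 ^ j) = 1) ∧ Even (n (2 ^ k))) ∧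
    ∀ k : ℕ, (∀ l : ℕ, ¬ (∃ k' : ℕ, l = 2 ^ k') → n l = 0) →
      (∀ j : ℕ, j < k → n (2 ^ j) = 1) → Even (n (2 ^ k)) →
      E = 2 ^ (k * (k - 1) / 2) *
        ∏ l ∈ n.support.filter (fun l => ∃ j : ℕ, k ≤ j ∧ l = 2 ^ j),
          ((1 + (oFun n l : ℤ)) *
            ∏ i ∈ Finset.range (n l - 1),
              (1 + (oFun n l : ℤ) + (l : ℤ) * ((n l : ℤ) - 2 - 2 * (i : ℤ)))) := by
  show (∏ l ∈ n.support, eulerFactor n (g l) l ≠ 0 ↔ _) ∧ ∀ k, _ → _ → _ →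
    ∏ l ∈ n.support, eulerFactor n (g l) l = _ * ∏ l ∈ _, eulerFactor n 1 l
  refine ⟨⟨fun hE => ?_, fun ⟨hsupp, k, h1, hk⟩ => ?_⟩,
    fun k hsupp h1 _ => prod_eulerFactor_eq n g hg1 hsupp h1⟩
  · have hsupp : ∀ l : ℕ, (¬∃ k : ℕ, l = 2 ^ k) → n l = 0 := fun l hl =>
      by_contra fun hnl => hE (prod_eulerFactor_eq_zero_of_not_pow n g hg0 ⟨l, hnl, hl⟩)
    have hQ := exists_two_pow_ne_one n
    have h1 : ∀ j < Nat.find hQ, n (2 ^ j) = 1 := fun j hj => not_not.mp (Nat.find_min hQ hj)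
    refine ⟨hsupp, Nat.find hQ, h1, Nat.not_odd_iff_even.mp fun hodd => hE ?_⟩
    refine prod_eq_zero (Finsupp.mem_support_iff.mpr hodd.pos.ne') ?_
    rw [hg1 _ ⟨_, rfl⟩]
    exact eulerFactor_two_pow_eq_zero_of_odd n h1 hodd (Nat.find_spec hQ)
  · rw [prod_eulerFactor_eq n g hg1 hsupp h1]
    refine mul_ne_zero (by positivity) (prod_ne_zero_iff.mpr fun l hl => ?_)
    obtain ⟨-, j, hkj, rfl⟩ := mem_filter.mp hl
    exact eulerFactor_two_pow_ne_zero n h1 hk hkj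

/-- Euler character criterion and product formula in the fixed-point case:
with `g_l = 1` for `l` a power of `2` and `g_l = 0` otherwise, the integer
`E = ∏_{l : n_l ≥ 1} (g_l + o_l) · ∏_{i=0}^{n_l−2} (g_l + o_l + l·(n_l−2−2i))`
is nonzero iff `n` is supported on powers of `2` and there is `k ≥ 0` with
`n_{2^j} = 1` for `j < k` and `n_{2^k}` even; in that case
`E = 2^{k(k−1)/2} · ∏_{j ≥ k, n_{2^j} ≥ 1} (1 + o_{2^j}) ·
∏_{i=0}^{n_{2^j}−2} (1 + o_{2^j} + 2^j·(n_{2^j}−2−2i))`. -/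
theorem euler_char_fixed_point_case (n : ℕ →₀ ℕ) (h0 : n 0 = 0) (g : ℕ → ℤ)
    (hg1 : ∀ l : ℕ, (∃ k : ℕ, l = 2 ^ k) → g l = 1)
    (hg0 : ∀ l : ℕ, ¬ (∃ k : ℕ, l = 2 ^ k) → g l = 0) :
    let E : ℤ := ∏ l ∈ n.support,
      (g l + (oFun n l : ℤ)) *
        ∏ i ∈ Finset.range (n l - 1),
          (g l + (oFun n l : ℤ) + (l : ℤ) * ((n l : ℤ) - 2 - 2 * (i : ℤ)))
    (E ≠ 0 ↔
      (∀ l : ℕ, ¬ (∃ k : ℕ, l = 2 ^ k) → n l = 0) ∧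
      ∃ k : ℕ, (∀ j : ℕ, j < k → n (2 ^ j) = 1) ∧ Even (n (2 ^ k))) ∧
    ∀ k : ℕ, (∀ l : ℕ, ¬ (∃ k' : ℕ, l = 2 ^ k') → n l = 0) →
      (∀ j : ℕ, j < k → n (2 ^ j) = 1) → Even (n (2 ^ k)) →
      E = 2 ^ (k * (k - 1) / 2) *
        ∏ l ∈ n.support.filter (fun l => ∃ j : ℕ, k ≤ j ∧ l = 2 ^ j),
          ((1 + (oFun n l : ℤ)) *
            ∏ i ∈ Finset.range (n l - 1),
              (1 + (oFun n l : ℤ) + (l : ℤ) * ((n l : ℤ) - 2 - 2 * (i : ℤ)))) :=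
  euler_char_fixed_point_case_general n g hg1 hg0
end

section
/- Let (n_m)_{m≥1} be a finitely supported family of nonnegative integers and set o_m = ∑_{k≥1, 2^k ∣ m} (m/2^k)·n_{m/2^k}. Then the polynomial M(s) = ∏_{l : n_l ≥ 1} (γ_l(s²) + o_l·s^l) · ∏_{i=0}^{n_l − 2} (γ_l(s²) + (o_l + l·(n_l − 2 − 2i))·s^l) ∈ ℤ[s] satisfies M(−s) = M(s); that is, M is a polynomial in s², so the graded character formula, written in terms of t^{1/2} = s, is in fact a polynomial in t. -/
open Polynomial

/-! For even `l` every factor of `M` is even in `s`. For odd `l` we have `o_l = 0`, so the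
substitution `s ↦ -s` negates the coefficients `l·(n_l − 2 − 2i)`, and the reflection
`i ↦ n_l − 2 − i` of the inner product undoes this. -/

lemma oFun_of_odd (n : ℕ →₀ ℕ) {m : ℕ} (hm : Odd m) : oFun n m = 0 := by
  refine Finset.sum_eq_zero fun k hk => absurd ?_ (Nat.not_even_iff_odd.mpr hm)
  rw [Finset.mem_filter, Finset.mem_Icc] at hk
  exact even_iff_two_dvd.mpr ((dvd_pow_self 2 (by omega)).trans hk.2)

lemma comp_X_sq_add_C_mul_X_pow_comp_neg_X {R : Type*} [CommRing R] (p : R[X]) (c : R) (l : ℕ) :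
    (p.comp (X ^ 2) + C c * X ^ l).comp (-X) = p.comp (X ^ 2) + C ((-1) ^ l * c) * X ^ l := by
  simp only [add_comp, mul_comp, C_comp, X_pow_comp, comp_assoc, neg_pow (X : R[X]),
    neg_one_sq, one_mul, C_mul, C_pow, C_neg, C_1]
  ring

lemma Finset.prod_range_neg_sub_one_sub_two_mul {M : Type*} [CommMonoid M] (f : ℤ → M) (N : ℕ) :
    ∏ i ∈ range N, f (-((N : ℤ) - 1 - 2 * i)) = ∏ i ∈ range N, f ((N : ℤ) - 1 - 2 * i) := by
  rw [← prod_range_reflect]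
  refine prod_congr rfl fun i hi => congr_arg f ?_
  have := mem_range.mp hi
  omega

theorem graded_character_even_general (n : ℕ →₀ ℕ) :
    let M : Polynomial ℤ := ∏ l ∈ n.support,
      ((gammaPoly l).comp (Polynomial.X ^ 2) +
          Polynomial.C ((oFun n l : ℤ)) * Polynomial.X ^ l) *
        ∏ i ∈ Finset.range (n l - 1),
          ((gammaPoly l).comp (Polynomial.X ^ 2) +
            Polynomial.C ((oFun n l : ℤ) + (l : ℤ) * ((n l : ℤ) - 2 - 2 * (i : ℤ))) *
              Polynomial.X ^ l)
    M.comp (-Polynomial.X) = M := by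
  intro M
  refine (prod_comp _ _ _).trans (Finset.prod_congr rfl fun l hl => ?_)
  simp only [mul_comp, prod_comp, comp_X_sq_add_C_mul_X_pow_comp_neg_X]
  rcases Nat.even_or_odd l with hl_even | hl_odd
  · simp only [hl_even.neg_one_pow, one_mul]
  · have hN : (n l : ℤ) - 2 = ((n l - 1 : ℕ) : ℤ) - 1 := by
      have := Finsupp.mem_support_iff.mp hl
      omega
    simp only [hl_odd.neg_one_pow, oFun_of_odd n hl_odd, hN, Nat.cast_zero, zero_add, mul_zero,
      neg_one_mul, ← mul_neg]
    rw [Finset.prod_range_neg_sub_one_sub_two_mul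
      (fun c => (gammaPoly l).comp (X ^ 2) + C ((l : ℤ) * c) * X ^ l)]

/-- The graded character in the variable `s = t^{1/2}`,
`M(s) = ∏_{l : n_l ≥ 1} (γ_l(s²) + o_l·s^l) ·
∏_{i=0}^{n_l−2} (γ_l(s²) + (o_l + l·(n_l−2−2i))·s^l)`,
is even: `M(−s) = M(s)`, i.e. it is a polynomial in `t = s²`. -/
theorem graded_character_even (n : ℕ →₀ ℕ) (h0 : n 0 = 0) :
    let M : Polynomial ℤ := ∏ l ∈ n.support,
      ((gammaPoly l).comp (Polynomial.X ^ 2) +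
          Polynomial.C ((oFun n l : ℤ)) * Polynomial.X ^ l) *
        ∏ i ∈ Finset.range (n l - 1),
          ((gammaPoly l).comp (Polynomial.X ^ 2) +
            Polynomial.C ((oFun n l : ℤ) + (l : ℤ) * ((n l : ℤ) - 2 - 2 * (i : ℤ))) *
              Polynomial.X ^ l)
    M.comp (-Polynomial.X) = M :=
  graded_character_even_general n
end
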